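/- For n > 3, let U be any word of the same type as U_n = x_1 x_2 ··· x_{n²} · J_n · x_{n²} ··· x_2 x_1, where J_n = (x_1 x_{1+n} ··· x_{1+n²−n})(x_2 x_{2+n} ··· x_{2+n²−n})···(x_n x_{2n} ··· x_{n²}). Then for each 1 ≤ i ≤ n², between any two distinct islands formed by x_i in U there occur at least n pairwise distinct variables. -/

import Mathlib

/-- Two words have the same type: equal up to changing the positive exponents of
their maximal single-letter blocks. -/
def SameType {α : Type*} (u v : List α) : Prop :=
  ∃ L : List (α × ℕ × ℕ),
    (∀ p ∈ L, 0 < p.2.1 ∧ 0 < p.2.2) ∧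
    List.Chain' (fun p q => p.1 ≠ q.1) L ∧
    u = L.flatMap (fun p => List.replicate p.2.1 p.1) ∧
    v = L.flatMap (fun p => List.replicate p.2.2 p.1)

/-- The height of a word: the number of islands (maximal one-letter power factors). -/
def height {α : Type*} [DecidableEq α] (u : List α) : ℕ :=
  (u.destutter (· ≠ ·)).length

/-- A monoid M satisfies the identity u ≈ v (words in countably many variables). -/
def SatM (M : Type*) [Monoid M] (u v : List ℕ) : Prop :=
  ∀ θ : ℕ → M, (u.map θ).prod = (v.map θ).prod

/-- Property (C_ℓ): every word over a two-letter alphabet {x,y} of height at most ℓ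
can form an identity of M only with a word of the same type. -/
def PropC (M : Type*) [Monoid M] (ℓ : ℕ) : Prop :=
  ∀ x y : ℕ, x ≠ y → ∀ u v : List ℕ, u ≠ [] → (∀ z ∈ u, z = x ∨ z = y) →
    height u ≤ ℓ → SatM M u v → SameType u v

/-- The Jackson word J_n = (x₁x_{1+n}⋯x_{1+n²−n})(x₂x_{2+n}⋯x_{2+n²−n})⋯(x_nx_{2n}⋯x_{n²}),
with the variable x_i encoded as the natural number i. -/
def Jword (n : ℕ) : List ℕ :=
  (List.range n).flatMap (fun i => (List.range n).map (fun j => i + 1 + j * n))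

/-- The word x₁x₂⋯x_{n²}. -/
def ascWord (n : ℕ) : List ℕ := (List.range (n ^ 2)).map (· + 1)

/-- The word U_n = x₁x₂⋯x_{n²} · J_n · x_{n²}⋯x₂x₁. -/
def Uword (n : ℕ) : List ℕ := ascWord n ++ Jword n ++ (ascWord n).reverse

/-!
It suffices to treat `U_n` itself. Both `U` and `U_n` are obtained from one list of
blocks `(letter, exponent)` by expanding the blocks; two islands of `x_i` in `U` with another
letter between them lie in two different blocks of letter `x_i`, and the same two blocks give two
islands of `x_i` in `U_n` separated only by letters occurring between the islands in `U`.

In `U_n` the letter `x_i`, with `i - 1 = q n + r` and `q, r < n`, occurs exactly at the positions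
`i - 1`, `n² + r n + q` (inside `J_n`, which lists the `n × n` grid column by column) and
`3 n² - i`. Between any two of these occurrences that are not adjacent there is a window of `n`
consecutive positions carrying pairwise distinct letters: the `n` positions after `i - 1`, the `n`
positions before `3 n² - i`, or, when `x_i` ends a column of `J_n`, the next column.
-/

open List

section Blocks

variable {α β : Type*} (e : β → ℕ) (x : β → α)

theorem mem_flatMap_replicate {L : List β} (he : ∀ b ∈ L, 0 < e b) {y : α} :
    y ∈ L.flatMap (fun b => replicate (e b) (x b)) ↔ ∃ b ∈ L, x b = y := by
  simp only [mem_flatMap, mem_replicate]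
  exact exists_congr fun b =>
    ⟨fun ⟨hb, _, h⟩ => ⟨hb, h.symm⟩, fun ⟨hb, h⟩ => ⟨hb, (he b hb).ne', h.symm⟩⟩

theorem exists_block_of_flatMap_replicate_eq {L : List β} {w w' : List α} {c : α}
    (h : L.flatMap (fun b => replicate (e b) (x b)) = w ++ c :: w') :
    ∃ L₁ b L₂ k k', L = L₁ ++ b :: L₂ ∧ x b = c ∧
      w = L₁.flatMap (fun b => replicate (e b) (x b)) ++ replicate k c ∧
      w' = replicate k' c ++ L₂.flatMap (fun b => replicate (e b) (x b)) := by
  induction L generalizing w with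
  | nil => simp at h
  | cons b L ih =>
    rw [flatMap_cons, append_eq_append_iff] at h
    obtain ⟨w₀, rfl, h⟩ | ⟨_ | ⟨c', c''⟩, hrep, h⟩ := h
    · obtain ⟨L₁, b', L₂, k, k', rfl, hb', rfl, rfl⟩ := ih h
      exact ⟨b :: L₁, b', L₂, k, k', rfl, hb', by simp, rfl⟩
    · obtain ⟨L₁, b', L₂, k, k', rfl, hb', hw, rfl⟩ := ih (w := []) h.symm
      exact ⟨b :: L₁, b', L₂, k, k', rfl, hb', by simp_all, rfl⟩
    · obtain ⟨rfl, rfl⟩ := cons_eq_cons.1 h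
      have hall : ∀ y ∈ w ++ c :: c'', y = x b := (eq_replicate_iff.1 hrep.symm).2
      have hxb : x b = c := (hall c (by simp)).symm
      refine ⟨[], b, L, w.length, c''.length, rfl, hxb, ?_, ?_⟩
      · simpa using eq_replicate_iff.2 ⟨rfl, fun y hy => hxb ▸ hall y (by simp [hy])⟩
      · simpa using eq_replicate_iff.2 ⟨rfl, fun y hy => hxb ▸ hall y (by simp [hy])⟩

theorem exists_islands_of_flatMap_replicate_eq {L : List β} {w₁ w₂ w₃ : List α} {i : α}
    (h : L.flatMap (fun b => replicate (e b) (x b)) = w₁ ++ i :: (w₂ ++ i :: w₃))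
    (hw₂ : ∃ c ∈ w₂, c ≠ i) :
    ∃ L₁ b L₂ b' L₃ k k', L = L₁ ++ b :: (L₂ ++ b' :: L₃) ∧ x b = i ∧ x b' = i ∧
      w₂ = replicate k i ++ L₂.flatMap (fun b => replicate (e b) (x b)) ++ replicate k' i := by
  obtain ⟨L₁, b, R, -, k, rfl, hb, -, hR⟩ := exists_block_of_flatMap_replicate_eq e x h
  obtain ⟨w₀, hrep, -⟩ | ⟨w₂', rfl, hw₂'⟩ := append_eq_append_iff.1 hR
  · obtain ⟨c, hc, hci⟩ := hw₂
    exact absurd (eq_of_mem_replicate (hrep ▸ mem_append_left w₀ hc)) hci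
  obtain ⟨L₂, b', L₃, k', -, rfl, hb', rfl, -⟩ := exists_block_of_flatMap_replicate_eq e x hw₂'
  exact ⟨L₁, b, L₂, b', L₃, k, k', rfl, hb, hb', (append_assoc _ _ _).symm⟩

end Blocks

theorem SameType.exists_islands_between_subset {α : Type*} {u v w₁ w₂ w₃ : List α} {i : α}
    (huv : SameType u v) (hu : u = w₁ ++ i :: w₂ ++ i :: w₃) (hw₂ : ∃ c ∈ w₂, c ≠ i) :
    ∃ v₁ v₂ v₃, v = v₁ ++ i :: v₂ ++ i :: v₃ ∧ (∃ c ∈ v₂, c ≠ i) ∧ v₂ ⊆ w₂ := by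
  obtain ⟨L, hpos, -, rfl, rfl⟩ := huv
  obtain ⟨L₁, b, L₂, b', L₃, k, k', rfl, hb, hb', rfl⟩ :=
    exists_islands_of_flatMap_replicate_eq _ _ (by simpa using hu) hw₂
  have hL₂ : ∀ p ∈ L₂, 0 < p.2.1 ∧ 0 < p.2.2 := fun p hp => hpos p (by simp [hp])
  have hletters : ∀ y, y ∈ L₂.flatMap (fun p => replicate p.2.2 p.1) ↔
      y ∈ L₂.flatMap (fun p => replicate p.2.1 p.1) := fun y => by
    rw [mem_flatMap_replicate _ _ fun p hp => (hL₂ p hp).2,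
      mem_flatMap_replicate _ _ fun p hp => (hL₂ p hp).1]
  obtain ⟨m, hm⟩ := Nat.exists_eq_add_one.2 (hpos b (by simp)).2
  obtain ⟨m', hm'⟩ := Nat.exists_eq_add_one.2 (hpos b' (by simp)).2
  refine ⟨L₁.flatMap (fun p => replicate p.2.2 p.1) ++ replicate m i,
    L₂.flatMap (fun p => replicate p.2.2 p.1),
    replicate m' i ++ L₃.flatMap (fun p => replicate p.2.2 p.1), ?_, ?_, ?_⟩
  · have h₁ : replicate b.2.2 b.1 = replicate m i ++ [i] := by rw [hm, hb, replicate_succ']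
    have h₂ : replicate b'.2.2 b'.1 = i :: replicate m' i := by rw [hm', hb', replicate_succ]
    simp [h₁, h₂]
  · obtain ⟨c, hc, hci⟩ := hw₂
    simp only [mem_append, mem_replicate] at hc
    exact ⟨c, (hletters c).2 (by tauto), hci⟩
  · exact fun y hy => mem_append_left _ (mem_append_right _ ((hletters y).1 hy))

theorem map_range_mul {α : Type*} (f : ℕ → α) (a b : ℕ) :
    (range (a * b)).map f = (range a).flatMap fun i => (range b).map fun j => f (i * b + j) := by
  induction a with
  | zero => simp
  | succ a ih => simp [Nat.succ_mul, range_add, ih, range_succ, Function.comp_def]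

theorem map_range_eq_append_cons_append_cons {α : Type*} {f : ℕ → α} {N : ℕ}
    {v₁ v₂ v₃ : List α} {y z : α} (h : (range N).map f = v₁ ++ y :: v₂ ++ z :: v₃) :
    f v₁.length = y ∧ f (v₁.length + v₂.length + 1) = z ∧ v₁.length + v₂.length + 1 < N ∧
      ∀ m, v₁.length < m → m < v₁.length + v₂.length + 1 → f m ∈ v₂ := by
  rw [append_assoc, cons_append] at h
  have hN : N = v₁.length + v₂.length + 2 + v₃.length := by
    simpa [Nat.add_comm, Nat.add_assoc, Nat.add_left_comm] using congrArg length h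
  have hget : ∀ m, v₁.length ≤ m → m < N →
      (y :: (v₂ ++ z :: v₃))[m - v₁.length]? = some (f m) := fun m h₁ h₂ => by
    rw [← getElem?_append_right h₁, ← h]
    simp [h₂]
  refine ⟨?_, ?_, by omega, fun m h₁ h₂ => ?_⟩
  · simpa using (hget _ le_rfl (by omega)).symm
  · have := hget (v₁.length + v₂.length + 1) (by omega) (by omega)
    rw [show v₁.length + v₂.length + 1 - v₁.length = v₂.length + 1 by omega, getElem?_cons_succ,
      getElem?_append_right le_rfl, Nat.sub_self, getElem?_cons_zero] at this
    exact (Option.some.inj this).symm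
  · have := hget m h₁.le (by omega)
    rw [show m - v₁.length = m - v₁.length - 1 + 1 by omega, getElem?_cons_succ,
      getElem?_append_left (by omega)] at this
    exact mem_of_getElem? this

theorem le_card_image_Ioo {α : Type*} [DecidableEq α] {f : ℕ → α} {a b s n : ℕ}
    (hf : Set.InjOn f (Set.Ico s (s + n))) (has : a < s) (hsb : s + n ≤ b) :
    n ≤ ((Finset.Ioo a b).image f).card := by
  calc n = ((Finset.Ico s (s + n)).image f).card := by
        rw [Finset.card_image_of_injOn (by simpa using hf), Nat.card_Ico, Nat.add_sub_cancel_left]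
    _ ≤ _ := Finset.card_le_card <| Finset.image_subset_image fun m hm => by
        simp only [Finset.mem_Ico, Finset.mem_Ioo] at hm ⊢; omega

def gridTranspose (n s : ℕ) : ℕ := s % n * n + s / n

theorem gridTranspose_mul_add {n r q : ℕ} (hq : q < n) :
    gridTranspose n (r * n + q) = q * n + r := by
  rw [gridTranspose, Nat.mul_add_mod_of_lt hq, Nat.add_comm (r * n),
    Nat.add_mul_div_right _ _ (by omega), Nat.div_eq_of_lt hq, Nat.zero_add]

theorem gridTranspose_gridTranspose {n s : ℕ} (hs : s < n ^ 2) :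
    gridTranspose n (gridTranspose n s) = s := by
  have hn : 0 < n := Nat.pos_of_ne_zero (by rintro rfl; simp at hs)
  conv_lhs => arg 2; rw [gridTranspose]
  rw [gridTranspose_mul_add ((Nat.div_lt_iff_lt_mul hn).2 (by rwa [← sq])),
    Nat.div_add_mod']

theorem gridTranspose_injOn (n : ℕ) : Set.InjOn (gridTranspose n) (Set.Iio (n ^ 2)) :=
  fun s hs t ht h => by
    rw [← gridTranspose_gridTranspose hs, h, gridTranspose_gridTranspose ht]

def uwordLetter (n m : ℕ) : ℕ :=
  if m < n ^ 2 then m + 1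
  else if m < 2 * n ^ 2 then gridTranspose n (m - n ^ 2) + 1
  else 3 * n ^ 2 - m

theorem Jword_eq_map_range (n : ℕ) :
    Jword n = (range (n ^ 2)).map fun s => gridTranspose n s + 1 := by
  rw [Jword, sq, map_range_mul]
  refine flatMap_congr fun r _ => map_congr_left fun q hq => ?_
  rw [gridTranspose_mul_add (mem_range.1 hq)]
  ring

theorem Uword_eq_map_range (n : ℕ) : Uword n = (range (3 * n ^ 2)).map (uwordLetter n) := by
  have hrev : (range (n ^ 2)).reverse = (range (n ^ 2)).map (n ^ 2 - 1 - ·) := by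
    rw [range_eq_range', reverse_range', ← range_eq_range']
    simp
  rw [Uword, ascWord, Jword_eq_map_range, ← map_reverse, hrev,
    show 3 * n ^ 2 = n ^ 2 + (n ^ 2 + n ^ 2) by ring, range_add, range_add]
  simp only [map_append, map_map, append_assoc]
  refine congrArg₂ _ (map_congr_left fun m hm => ?_)
    (congrArg₂ _ (map_congr_left fun m hm => ?_) (map_congr_left fun m hm => ?_)) <;>
  · rw [mem_range] at hm
    simp only [Function.comp_apply, uwordLetter, Nat.add_sub_cancel_left]
    split_ifs <;> omega

theorem eq_of_uwordLetter_eq {n q r m : ℕ} (hq : q < n) (hr : r < n) (hm : m < 3 * n ^ 2)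
    (h : uwordLetter n m = q * n + r + 1) :
    m = q * n + r ∨ m = n ^ 2 + (r * n + q) ∨ m = 3 * n ^ 2 - (q * n + r + 1) := by
  unfold uwordLetter at h
  split_ifs at h with h₁ h₂
  · omega
  · have h' : gridTranspose n (m - n ^ 2) = gridTranspose n (r * n + q) := by
      rw [gridTranspose_mul_add hq]; omega
    have := gridTranspose_injOn n (by simp; omega) (by simp; nlinarith) h'
    omega
  · omega

theorem uwordLetter_injOn_Ico_sq (n : ℕ) :
    Set.InjOn (uwordLetter n) (Set.Ico (n ^ 2) (2 * n ^ 2)) := by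
  intro m hm m' hm' h
  simp only [Set.mem_Ico] at hm hm'
  simp only [uwordLetter, if_neg (not_lt.2 hm.1), if_neg (not_lt.2 hm'.1), if_pos hm.2,
    if_pos hm'.2, Nat.add_right_cancel_iff] at h
  have := gridTranspose_injOn n (by simp; omega) (by simp; omega) h
  omega

theorem uwordLetter_injOn_Ico_two_mul_sq (n : ℕ) :
    Set.InjOn (uwordLetter n) (Set.Ico (2 * n ^ 2) (3 * n ^ 2)) := by
  intro m hm m' hm' h
  simp only [Set.mem_Ico] at hm hm'
  simp only [uwordLetter] at h
  split_ifs at h <;> omega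

theorem uwordLetter_injOn_Ico_add {n i : ℕ} (hi : i ≤ n ^ 2) :
    Set.InjOn (uwordLetter n) (Set.Ico i (i + n)) := by
  have hJ : ∀ m, n ^ 2 ≤ m → m < i + n →
      uwordLetter n m = (m - n ^ 2) * n + 1 ∧ (m - n ^ 2) * n + n ≤ n ^ 2 := fun m h₁ h₂ => by
    have hk : m - n ^ 2 < n := by omega
    refine ⟨?_, by nlinarith⟩
    have h₃ : m < 2 * n ^ 2 := by nlinarith
    have := gridTranspose_mul_add (r := 0) hk
    simp only [zero_mul, zero_add, add_zero] at this
    simp only [uwordLetter, if_neg (not_lt.2 h₁), if_pos h₃, this]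
  have hasc : ∀ m, m < n ^ 2 → uwordLetter n m = m + 1 := fun m h => if_pos h
  intro m hm m' hm' h
  simp only [Set.mem_Ico] at hm hm'
  rcases lt_or_ge m (n ^ 2) with h₁ | h₁ <;> rcases lt_or_ge m' (n ^ 2) with h₂ | h₂
  · rw [hasc m h₁, hasc m' h₂] at h; omega
  · obtain ⟨e, hbound⟩ := hJ m' h₂ hm'.2; rw [hasc m h₁, e] at h; omega
  · obtain ⟨e, hbound⟩ := hJ m h₁ hm.2; rw [hasc m' h₂, e] at h; omega
  · obtain ⟨e, -⟩ := hJ m h₁ hm.2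
    obtain ⟨e', -⟩ := hJ m' h₂ hm'.2
    rw [e, e', Nat.add_right_cancel_iff] at h
    have := Nat.eq_of_mul_eq_mul_right (by omega) h
    omega

theorem le_card_image_Ioo_uwordLetter {n i a b : ℕ} (hn : 1 < n) (hi : 1 ≤ i) (hi' : i ≤ n ^ 2)
    (ha : uwordLetter n a = i) (hb : uwordLetter n b = i) (hab : a + 1 < b)
    (hb' : b < 3 * n ^ 2) : n ≤ ((Finset.Ioo a b).image (uwordLetter n)).card := by
  obtain ⟨q, r, hq, hr, rfl⟩ : ∃ q r, q < n ∧ r < n ∧ i = q * n + r + 1 :=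
    ⟨(i - 1) / n, (i - 1) % n, (Nat.div_lt_iff_lt_mul (by omega)).2 (by rw [← sq]; omega),
      Nat.mod_lt _ (by omega), by have := Nat.div_add_mod' (i - 1) n; omega⟩
  have hqn : q * n + n ≤ n ^ 2 := by nlinarith
  have hrn : r * n + n ≤ n ^ 2 := by nlinarith
  rcases eq_of_uwordLetter_eq hq hr (by omega) ha with rfl | rfl | rfl <;>
    rcases eq_of_uwordLetter_eq hq hr hb' hb with rfl | rfl | rfl <;> try omega
  · exact le_card_image_Ioo (uwordLetter_injOn_Ico_add hi') (by omega) (by nlinarith)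
  · exact le_card_image_Ioo (uwordLetter_injOn_Ico_add hi') (by omega) (by omega)
  · rcases (show q + 1 < n ∨ q + 1 = n by omega) with hq' | hq'
    · have : q * n + 2 * n ≤ n ^ 2 := by nlinarith
      exact le_card_image_Ioo ((uwordLetter_injOn_Ico_two_mul_sq n).mono fun m hm => by
        simp only [Set.mem_Ico] at hm ⊢; omega) (s := 3 * n ^ 2 - (q * n + r + 1) - n)
        (by omega) (by omega)
    · have : q * n + n = n ^ 2 := by rw [← hq']; ring
      rcases (show r + 1 < n ∨ r + 1 = n by omega) with hr' | hr'
      · have : r * n + 2 * n ≤ n ^ 2 := by nlinarith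
        exact le_card_image_Ioo ((uwordLetter_injOn_Ico_sq n).mono fun m hm => by
          simp only [Set.mem_Ico] at hm ⊢; omega) (s := n ^ 2 + (r * n + q) + 1)
          (by omega) (by omega)
      · -- `i = n²`: the last two islands of `x_{n²}` are adjacent
        have : r * n + n = n ^ 2 := by rw [← hr']; ring
        omega

theorem le_card_toFinset_of_Uword_eq {n i : ℕ} {v₁ v₂ v₃ : List ℕ} (hn : 1 < n) (hi : 1 ≤ i)
    (hi' : i ≤ n ^ 2) (h : Uword n = v₁ ++ i :: v₂ ++ i :: v₃) (hv₂ : v₂ ≠ []) :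
    n ≤ v₂.toFinset.card := by
  rw [Uword_eq_map_range] at h
  obtain ⟨ha, hb, hbN, hmem⟩ := map_range_eq_append_cons_append_cons h
  calc n ≤ ((Finset.Ioo v₁.length (v₁.length + v₂.length + 1)).image (uwordLetter n)).card :=
        le_card_image_Ioo_uwordLetter hn hi hi' ha hb (by have := length_pos_iff.2 hv₂; omega) hbN
    _ ≤ v₂.toFinset.card := Finset.card_le_card fun c hc => by
        obtain ⟨m, hm, rfl⟩ := Finset.mem_image.1 hc
        exact mem_toFinset.2 (hmem m (Finset.mem_Ioo.1 hm).1 (Finset.mem_Ioo.1 hm).2)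

/-- (P2) For n > 3, in any word U of the same type as U_n, between any two distinct
islands formed by x_i there occur at least n pairwise distinct variables. -/
theorem stmt18 (n : ℕ) (hn : 3 < n) (U : List ℕ) (hU : SameType U (Uword n))
    (i : ℕ) (hi : 1 ≤ i) (hi' : i ≤ n ^ 2)
    (w1 w2 w3 : List ℕ) (hfac : U = w1 ++ i :: w2 ++ i :: w3)
    (hdist : ∃ c ∈ w2, c ≠ i) :
    n ≤ w2.toFinset.card := by
  obtain ⟨v₁, v₂, v₃, hv, ⟨c, hc, -⟩, hsub⟩ := hU.exists_islands_between_subset hfac hdist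
  calc n ≤ v₂.toFinset.card := le_card_toFinset_of_Uword_eq (by omega) hi hi' hv (ne_nil_of_mem hc)
    _ ≤ w2.toFinset.card :=
      Finset.card_le_card fun c hc => mem_toFinset.2 (hsub (mem_toFinset.1 hc))
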